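/- arXiv:2312.14445 — 6 statements merged into one kernel-verified Lean document; each statement's English description precedes it below -/
import Mathlib

section
/- The conditional outer integral operator satisfies the tower inequality: for any trajectory S ∈ 𝒮, any non-negative integers j ≤ k, and any function f : 𝒮 → [-∞,∞], one has σ̄_j(σ̄_k f)(S) ≤ σ̄_j f(S). -/
open Filter Set
open scoped Classical ENNReal

noncomputable section

abbrev Traj := ℕ → ℝ

/-- Portfolio value `Π^{V,H}_{j,n}`. -/
def PiVal (j n : ℕ) (V : ℝ) (H : ℕ → Traj → ℝ) (y : Traj) : ℝ :=
  V + ∑ i ∈ Finset.Ico j n, H i y * (y (i + 1) - y i)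

/-- Non-anticipativity of a sequence of functions on a set of trajectories. -/
def NonAnticipOn (A : Set Traj) (H : ℕ → Traj → ℝ) : Prop :=
  ∀ i, ∀ x ∈ A, ∀ y ∈ A, (∀ k ≤ i, x k = y k) → H i x = H i y

/-- Non-anticipativity (at time `j`) of a single extended-real-valued function. -/
def NonAnticipF (A : Set Traj) (j : ℕ) (g : Traj → EReal) : Prop :=
  ∀ x ∈ A, ∀ y ∈ A, (∀ k ≤ j, x k = y k) → g x = g y

/-- Conditional space `𝒮_{(x,j)}`. -/
def Cond (𝒮 : Set Traj) (x : Traj) (j : ℕ) : Set Traj :=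
  {y ∈ 𝒮 | ∀ i ≤ j, y i = x i}

/-- `liminf_{n→∞} Π^{V,H}_{j,n}` as a value in `[0,∞]`. -/
def limInfVal (j : ℕ) (V : ℝ) (H : ℕ → Traj → ℝ) (y : Traj) : ℝ≥0∞ :=
  Filter.liminf (fun n => ENNReal.ofReal (PiVal j n V H y)) Filter.atTop

/-- The conditional null operator `Ī_j` on a set `A` of trajectories. -/
def IUpOn (A : Set Traj) (j : ℕ) (f : Traj → ℝ≥0∞) : ℝ≥0∞ :=
  sInf { c | ∃ (V : ℕ → ℝ) (H : ℕ → ℕ → Traj → ℝ),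
    (∀ m, NonAnticipOn A (H m)) ∧
    (∀ m n, ∀ y ∈ A, 0 ≤ PiVal j n (V m) (H m) y) ∧
    (∀ y ∈ A, f y ≤ ∑' m, limInfVal j (V m) (H m) y) ∧
    c = ∑' m, ENNReal.ofReal (V m) }

/-- `Ī_j f (x)`, conditioned on the node `(x,j)`. -/
def IUp (𝒮 : Set Traj) (j : ℕ) (f : Traj → ℝ≥0∞) (x : Traj) : ℝ≥0∞ :=
  IUpOn (Cond 𝒮 x j) j f

/-- The conditional superhedging outer integral on a set `A`, starting at time `j`. -/
def sigmaUpOn (A : Set Traj) (j : ℕ) (f : Traj → EReal) : EReal :=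
  sInf { c : EReal | ∃ (V0 : ℝ) (H0 : ℕ → Traj → ℝ) (n0 : ℕ) (V : ℕ → ℝ)
      (H : ℕ → ℕ → Traj → ℝ),
    NonAnticipOn A H0 ∧ (∀ m, NonAnticipOn A (H m)) ∧
    (∀ m n, ∀ y ∈ A, 0 ≤ PiVal j n (V m) (H m) y) ∧
    (∀ y ∈ A, f y ≤ (PiVal j n0 V0 H0 y : EReal) +
      ((∑' m, limInfVal j (V m) (H m) y : ℝ≥0∞) : EReal)) ∧
    c = (V0 : EReal) + ((∑' m, ENNReal.ofReal (V m) : ℝ≥0∞) : EReal) }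

/-- `σ̄_j f (x)`. -/
def sigmaUp (𝒮 : Set Traj) (j : ℕ) (f : Traj → EReal) (x : Traj) : EReal :=
  sigmaUpOn (Cond 𝒮 x j) j f

/-- `σ̲_j f (x) = -σ̄_j (-f)(x)`. -/
def sigmaDown (𝒮 : Set Traj) (j : ℕ) (f : Traj → EReal) (x : Traj) : EReal :=
  - sigmaUp 𝒮 j (fun y => - f y) x

/-- A set is `Ī`-null. -/
def NullSet (𝒮 : Set Traj) (E : Set Traj) : Prop :=
  IUpOn 𝒮 0 (fun y => if y ∈ E then 1 else 0) = 0

/-- A property holds `Ī`-almost everywhere on `𝒮`. -/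
def AEOn (𝒮 : Set Traj) (P : Traj → Prop) : Prop :=
  NullSet 𝒮 {y ∈ 𝒮 | ¬ P y}

/-- Property `(L_{(x,j)})`, continuity from below at the node `(x,j)`. -/
def PropL (𝒮 : Set Traj) (x : Traj) (j : ℕ) : Prop :=
  ∀ (V0 : ℝ) (H0 : ℕ → Traj → ℝ) (n0 : ℕ) (V : ℕ → ℝ) (H : ℕ → ℕ → Traj → ℝ),
    NonAnticipOn (Cond 𝒮 x j) H0 → (∀ m, NonAnticipOn (Cond 𝒮 x j) (H m)) →
    (∀ m n, ∀ y ∈ Cond 𝒮 x j, 0 ≤ PiVal j n (V m) (H m) y) →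
    (∀ y ∈ Cond 𝒮 x j, (PiVal j n0 V0 H0 y : EReal) ≤
      ((∑' m, limInfVal j (V m) (H m) y : ℝ≥0∞) : EReal)) →
    (V0 : EReal) ≤ ((∑' m, ENNReal.ofReal (V m) : ℝ≥0∞) : EReal)

/-- Assumption `(L)`-a.e. -/
def LaeAssumption (𝒮 : Set Traj) : Prop :=
  (∀ x ∈ 𝒮, PropL 𝒮 x 0) ∧ NullSet 𝒮 {x ∈ 𝒮 | ∃ j, ¬ PropL 𝒮 x j}

/-- Up-down node. -/
def UpDownNode (𝒮 : Set Traj) (x : Traj) (j : ℕ) : Prop :=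
  (∃ y ∈ Cond 𝒮 x j, x j < y (j + 1)) ∧ (∃ y ∈ Cond 𝒮 x j, y (j + 1) < x j)

/-- Flat node. -/
def FlatNode (𝒮 : Set Traj) (x : Traj) (j : ℕ) : Prop :=
  ∀ y ∈ Cond 𝒮 x j, y (j + 1) = x j

/-- Arbitrage node. -/
def ArbitrageNode (𝒮 : Set Traj) (x : Traj) (j : ℕ) : Prop :=
  ¬ UpDownNode 𝒮 x j ∧ ¬ FlatNode 𝒮 x j

/-- Type II arbitrage node. -/
def TypeIINode (𝒮 : Set Traj) (x : Traj) (j : ℕ) : Prop :=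
  ArbitrageNode 𝒮 x j ∧ ¬ ∃ y ∈ Cond 𝒮 x j, y (j + 1) = x j

/-- Trajectory based stopping time. -/
def StoppingTime (𝒮 : Set Traj) (τ : Traj → ℕ∞) : Prop :=
  ∀ x ∈ 𝒮, ∀ y ∈ 𝒮, (∀ k : ℕ, (k : ℕ∞) ≤ τ x → x k = y k) → τ x = τ y

/-- `⊤`-dominant addition on `EReal`, implementing the convention `∞ + (−∞) = ∞`. -/
def eadd (a b : EReal) : EReal := if a = ⊤ ∨ b = ⊤ then ⊤ else a + b

/-- Subtraction `u − v = u + (−v)` with the convention `∞ + (−∞) = ∞`. -/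
def esub (a b : EReal) : EReal := eadd a (-b)

/-- Supermartingale. -/
def TrajSupermartingale (𝒮 : Set Traj) (f : ℕ → Traj → EReal) : Prop :=
  (∀ j, NonAnticipF 𝒮 j (f j)) ∧
  ∀ j, AEOn 𝒮 (fun x => sigmaUp 𝒮 j (f (j + 1)) x ≤ f j x)

lemma piVal_stop (j k n : ℕ) (V : ℝ) (H : ℕ → Traj → ℝ) (y : Traj) :
    PiVal j n V (fun i z => if i < k then H i z else 0) y = PiVal j (min n k) V H y := by
  unfold PiVal
  congr 1
  have h : Finset.Ico j (min n k) = (Finset.Ico j n).filter (fun i => i < k) := by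
    ext i; simp only [Finset.mem_Ico, Finset.mem_filter]; omega
  rw [h, Finset.sum_filter]
  apply Finset.sum_congr rfl
  intro i _
  by_cases hi : i < k <;> simp [hi]

lemma piVal_empty (j n : ℕ) (hn : n ≤ j) (V : ℝ) (H : ℕ → Traj → ℝ) (y : Traj) :
    PiVal j n V H y = V := by
  unfold PiVal
  rw [Finset.Ico_eq_empty (by omega)]
  simp

lemma piVal_split (j k n : ℕ) (hjk : j ≤ k) (hkn : k ≤ n) (V : ℝ) (H : ℕ → Traj → ℝ)
    (y z : Traj) (hagree : ∀ i ≤ k, z i = y i) (hH : ∀ i < k, H i z = H i y) :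
    PiVal k n (PiVal j k V H y) H z = PiVal j n V H z := by
  unfold PiVal
  rw [← Finset.sum_Ico_consecutive (fun i => H i z * (z (i + 1) - z i)) hjk hkn]
  have h : ∑ i ∈ Finset.Ico j k, H i z * (z (i + 1) - z i)
      = ∑ i ∈ Finset.Ico j k, H i y * (y (i + 1) - y i) := by
    apply Finset.sum_congr rfl
    intro i hi
    rw [Finset.mem_Ico] at hi
    rw [hH i hi.2, hagree (i + 1) hi.2, hagree i (le_of_lt hi.2)]
  rw [h]; ring

lemma piVal_short (j n k : ℕ) (hn : n ≤ k) (V : ℝ) (H : ℕ → Traj → ℝ) (y z : Traj)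
    (hagree : ∀ i ≤ k, z i = y i) (hH : ∀ i < k, H i z = H i y) :
    PiVal j n V H z = PiVal j n V H y := by
  unfold PiVal
  congr 1
  apply Finset.sum_congr rfl
  intro i hi
  rw [Finset.mem_Ico] at hi
  have h1 : i < k := lt_of_lt_of_le hi.2 hn
  rw [hH i h1, hagree (i + 1) h1, hagree i (le_of_lt h1)]

lemma limInfVal_eventually_eq (j j' : ℕ) (V V' : ℝ) (H H' : ℕ → Traj → ℝ) (y z : Traj)
    (N : ℕ) (h : ∀ n ≥ N, PiVal j n V H y = PiVal j' n V' H' z) :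
    limInfVal j V H y = limInfVal j' V' H' z := by
  unfold limInfVal
  apply Filter.liminf_congr
  filter_upwards [Filter.eventually_ge_atTop N] with n hn
  rw [h n hn]

lemma limInfVal_const (j N : ℕ) (V : ℝ) (H : ℕ → Traj → ℝ) (y : Traj) (c : ℝ)
    (h : ∀ n ≥ N, PiVal j n V H y = c) : limInfVal j V H y = ENNReal.ofReal c := by
  unfold limInfVal
  rw [Filter.liminf_congr
    (by filter_upwards [Filter.eventually_ge_atTop N] with n hn; rw [h n hn])]
  exact Filter.liminf_const _

lemma nonAnticipOn_mono {A B : Set Traj} {H : ℕ → Traj → ℝ} (hAB : A ⊆ B)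
    (h : NonAnticipOn B H) : NonAnticipOn A H :=
  fun i a ha b hb hab => h i a (hAB ha) b (hAB hb) hab

/-- tower inequality `σ̄_j(σ̄_k f)(S) ≤ σ̄_j f(S)` for `j ≤ k`. -/
theorem tower_inequality
    (𝒮 : Set Traj) (x : Traj) (hx : x ∈ 𝒮) (j k : ℕ) (hjk : j ≤ k)
    (f : Traj → EReal) :
    sigmaUp 𝒮 j (fun y => sigmaUp 𝒮 k f y) x ≤ sigmaUp 𝒮 j f x := by
  have hsub : ∀ y ∈ Cond 𝒮 x j, Cond 𝒮 y k ⊆ Cond 𝒮 x j := by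
    rintro y ⟨hy𝒮, hyx⟩ z ⟨hz𝒮, hzy⟩
    exact ⟨hz𝒮, fun i hi => by rw [hzy i (le_trans hi hjk), hyx i hi]⟩
  unfold sigmaUp sigmaUpOn
  apply le_sInf
  rintro c ⟨V0, H0, n0, V, H, hH0, hH, hpos, hsup, rfl⟩
  apply sInf_le
  refine ⟨V0, H0, min n0 k, V, fun m i z => if i < k then H m i z else 0,
    hH0, ?_, ?_, ?_, rfl⟩
  · intro m i a ha b hb hab
    by_cases hi : i < k
    · simp only [hi, if_true]
      exact hH m i a ha b hb hab
    · simp [hi]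
  · intro m n y hy
    rw [piVal_stop]
    exact hpos m (min n k) y hy
  · intro y hy
    have hyx := hy
    obtain ⟨hy𝒮, _⟩ := hy
    have hlim : ∀ m, limInfVal j (V m) (fun i z => if i < k then H m i z else 0) y
        = ENNReal.ofReal (PiVal j k (V m) (H m) y) := by
      intro m
      apply limInfVal_const j k
      intro n hn
      rw [piVal_stop, min_eq_right hn]
    have htsum : ∑' m, limInfVal j (V m) (fun i z => if i < k then H m i z else 0) y
        = ∑' m, ENNReal.ofReal (PiVal j k (V m) (H m) y) := tsum_congr hlim
    show sigmaUp 𝒮 k f y ≤ _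
    rw [htsum]
    unfold sigmaUp sigmaUpOn
    -- agreement of H on pairs in Cond 𝒮 y k with y
    have hHagree : ∀ (G : ℕ → Traj → ℝ), NonAnticipOn (Cond 𝒮 x j) G →
        ∀ z ∈ Cond 𝒮 y k, ∀ i < k, G i z = G i y := by
      intro G hG z hz i hi
      exact hG i z (hsub y hyx hz) y hyx (fun k' hk' => hz.2 k' (le_trans hk' (le_of_lt hi)))
    apply sInf_le
    refine ⟨PiVal j (min n0 k) V0 H0 y, H0, max n0 k,
      fun m => PiVal j k (V m) (H m) y, H,
      nonAnticipOn_mono (hsub y hyx) hH0,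
      fun m => nonAnticipOn_mono (hsub y hyx) (hH m), ?_, ?_, rfl⟩
    · intro m n z hz
      by_cases hn : k ≤ n
      · rw [piVal_split j k n hjk hn (V m) (H m) y z hz.2 (hHagree (H m) (hH m) z hz)]
        exact hpos m n z (hsub y hyx hz)
      · rw [piVal_empty k n (le_of_not_ge hn)]
        exact hpos m k y hyx
    · intro z hz
      have hzx := hsub y hyx hz
      have hlim2 : ∀ m, limInfVal k (PiVal j k (V m) (H m) y) (H m) z
          = limInfVal j (V m) (H m) z := by
        intro m
        apply limInfVal_eventually_eq k j _ _ _ _ _ _ k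
        intro n hn
        exact piVal_split j k n hjk hn (V m) (H m) y z hz.2 (hHagree (H m) (hH m) z hz)
      have helem : PiVal k (max n0 k) (PiVal j (min n0 k) V0 H0 y) H0 z
          = PiVal j n0 V0 H0 z := by
        by_cases hkn0 : k ≤ n0
        · rw [min_eq_right hkn0, max_eq_left hkn0]
          exact piVal_split j k n0 hjk hkn0 V0 H0 y z hz.2 (hHagree H0 hH0 z hz)
        · have hn0k : n0 ≤ k := le_of_not_ge hkn0
          rw [min_eq_left hn0k, max_eq_right hn0k, piVal_empty k k le_rfl,
            piVal_short j n0 k hn0k V0 H0 y z hz.2 (hHagree H0 hH0 z hz)]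
      rw [helem]
      have htsum2 : ∑' m, limInfVal k (PiVal j k (V m) (H m) y) (H m) z
          = ∑' m, limInfVal j (V m) (H m) z := tsum_congr hlim2
      rw [htsum2]
      exact hsup z hzx

end
end

section
/- At a fixed node (S,j), the following are equivalent: (1) σ̄_j 0 (S) = 0; (2) σ̲_j f(S) ≤ σ̄_j f(S) for every f : 𝒮 → [-∞,∞], where σ̲_j f = −σ̄_j(−f); (3) property (L_{(S,j)}) holds, i.e., whenever an elementary portfolio value Π^{V,H}_{j,n_f} is dominated on 𝒮_{(S,j)} by a countable sum Σ_{m≥1} liminf_{n→∞} Π^{V^m,H^m}_{j,n} of liminfs of nonnegative portfolio values, then V ≤ Σ_{m≥1} V^m; (4) for every elementary f = Π^{V,H}_{j,n_f} ∈ ℰ_{(S,j)}, σ̲_j f(S) = V = σ̄_j f(S). -/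
open Filter Set
open scoped Classical ENNReal

noncomputable section

-- helper lemmas
lemma PiVal_neg (j n : ℕ) (V : ℝ) (H : ℕ → Traj → ℝ) (y : Traj) :
    PiVal j n (-V) (fun i z => -(H i z)) y = -PiVal j n V H y := by
  simp [PiVal, neg_mul, Finset.sum_neg_distrib]; ring

lemma PiVal_zero (j n : ℕ) (y : Traj) : PiVal j n 0 (fun _ _ => 0) y = 0 := by
  simp [PiVal]

lemma limInfVal_zero (j : ℕ) (y : Traj) : limInfVal j 0 (fun _ _ => 0) y = 0 := by
  simp [limInfVal, PiVal_zero]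

lemma ereal_nonneg_iff (p : ℝ) (s : ℝ≥0∞) :
    (0:EReal) ≤ (p:EReal) + (s:EReal) ↔ (((-p):ℝ):EReal) ≤ (s:EReal) := by
  by_cases hs : s = ⊤
  · subst hs
    simp [EReal.coe_ennreal_top, EReal.coe_add_top, le_top]
  · have h1 : ((s:EReal)) = ((s.toReal : ℝ) : EReal) := by
      rw [← EReal.toReal_coe_ennreal]
      exact (EReal.coe_toReal (by simpa [EReal.coe_ennreal_eq_top_iff] using hs)
        (by simp)).symm
    rw [h1, ← EReal.coe_add]
    rw [show ((0:EReal) = ((0:ℝ):EReal)) from rfl, EReal.coe_le_coe_iff, EReal.coe_le_coe_iff]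
    constructor <;> intro <;> linarith
lemma ereal_pair_nonneg {f : EReal} {p q : ℝ} {s t : ℝ≥0∞}
    (h1 : f ≤ (p:EReal) + (s:EReal)) (h2 : -f ≤ (q:EReal) + (t:EReal)) :
    (0:EReal) ≤ (((p+q):ℝ):EReal) + (((s+t):ℝ≥0∞):EReal) := by
  by_cases hst : s = ⊤ ∨ t = ⊤
  · have : s + t = ⊤ := by
      rcases hst with h | h <;> simp [h]
    rw [this]
    simp [EReal.coe_ennreal_top, EReal.coe_add_top, le_top]
  · push_neg at hst
    obtain ⟨hs, ht⟩ := hst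
    have hsE : ((s:EReal)) = ((s.toReal : ℝ) : EReal) := by
      rw [← EReal.toReal_coe_ennreal]
      exact (EReal.coe_toReal (by simpa [EReal.coe_ennreal_eq_top_iff] using hs) (by simp)).symm
    have htE : ((t:EReal)) = ((t.toReal : ℝ) : EReal) := by
      rw [← EReal.toReal_coe_ennreal]
      exact (EReal.coe_toReal (by simpa [EReal.coe_ennreal_eq_top_iff] using ht) (by simp)).symm
    rw [hsE, ← EReal.coe_add] at h1
    rw [htE, ← EReal.coe_add] at h2
    have hft : f ≠ ⊤ := ne_top_of_le_ne_top (EReal.coe_ne_top _) h1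
    have hfb : f ≠ ⊥ := by
      intro h
      rw [h] at h2
      simp only [EReal.neg_bot, top_le_iff] at h2
      exact EReal.coe_ne_top _ h2
    lift f to ℝ using ⟨hft, hfb⟩ with r
    rw [EReal.coe_le_coe_iff] at h1
    rw [← EReal.coe_neg, EReal.coe_le_coe_iff] at h2
    have hstE : (((s+t):ℝ≥0∞):EReal) = ((s.toReal + t.toReal : ℝ) : EReal) := by
      rw [← ENNReal.toReal_add hs ht, ← EReal.toReal_coe_ennreal]
      exact (EReal.coe_toReal (by intro hh; rw [EReal.coe_ennreal_eq_top_iff, ENNReal.add_eq_top] at hh; tauto)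
        (by simp)).symm
    rw [hstE, ← EReal.coe_add, show ((0:EReal) = ((0:ℝ):EReal)) from rfl, EReal.coe_le_coe_iff]
    linarith

lemma ereal_neg_le_of_nonneg_add {c c' : EReal} (hc : c ≠ ⊥) (hc' : c' ≠ ⊥)
    (h : 0 ≤ c + c') : -c' ≤ c := by
  rcases eq_or_ne c' ⊤ with h' | h'
  · simp [h']
  rcases eq_or_ne c ⊤ with h0 | h0
  · simp [h0, le_top]
  lift c to ℝ using ⟨h0, hc⟩ with a
  lift c' to ℝ using ⟨h', hc'⟩ with b
  rw [← EReal.coe_add, show ((0:EReal) = ((0:ℝ):EReal)) from rfl, EReal.coe_le_coe_iff] at h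
  rw [← EReal.coe_neg, EReal.coe_le_coe_iff]
  linarith

lemma sum_truncate (j n0 n : ℕ) (h : n0 ≤ n) (H : ℕ → Traj → ℝ) (y : Traj) :
    ∑ i ∈ Finset.Ico j n, (if i < n0 then H i y else 0) * (y (i+1) - y i)
      = ∑ i ∈ Finset.Ico j n0, H i y * (y (i+1) - y i) := by
  rw [← Finset.sum_subset (Finset.Ico_subset_Ico_right h)
    (fun i hi hni => ?_)]
  · exact Finset.sum_congr rfl fun i hi => by
      rw [if_pos (Finset.mem_Ico.mp hi).2]
  · have hji : j ≤ i := (Finset.mem_Ico.mp hi).1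
    have : ¬ i < n0 := fun hlt => hni (Finset.mem_Ico.mpr ⟨hji, hlt⟩)
    rw [if_neg this, zero_mul]

lemma PiVal_combine (j n0 n0' : ℕ) (V0 V0' : ℝ) (H0 H0' : ℕ → Traj → ℝ) (y : Traj) :
    PiVal j (max n0 n0') (V0 + V0')
      (fun i z => (if i < n0 then H0 i z else 0) + (if i < n0' then H0' i z else 0)) y
      = PiVal j n0 V0 H0 y + PiVal j n0' V0' H0' y := by
  unfold PiVal
  simp only [add_mul, Finset.sum_add_distrib]
  rw [sum_truncate j n0 _ (le_max_left _ _), sum_truncate j n0' _ (le_max_right _ _)]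
  ring

lemma tsum_interleave (a b : ℕ → ℝ≥0∞) :
    (∑' m, if Even m then a (m/2) else b (m/2)) = (∑' m, a m) + (∑' m, b m) := by
  rw [← tsum_even_add_odd ENNReal.summable ENNReal.summable]
  congr 1
  · exact tsum_congr fun k => by
      simp [Nat.mul_div_cancel_left k (by norm_num : 0 < 2)]
  · exact tsum_congr fun k => by
      have h1 : ¬ Even (2 * k + 1) := by simp [Nat.even_add_one, parity_simps]
      have h2 : (2 * k + 1) / 2 = k := by omega
      simp [h1, h2]
/-- The defining set of `sigmaUpOn`. -/
def CovSet (A : Set Traj) (j : ℕ) (f : Traj → EReal) : Set EReal :=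
  { c : EReal | ∃ (V0 : ℝ) (H0 : ℕ → Traj → ℝ) (n0 : ℕ) (V : ℕ → ℝ)
      (H : ℕ → ℕ → Traj → ℝ),
    NonAnticipOn A H0 ∧ (∀ m, NonAnticipOn A (H m)) ∧
    (∀ m n, ∀ y ∈ A, 0 ≤ PiVal j n (V m) (H m) y) ∧
    (∀ y ∈ A, f y ≤ (PiVal j n0 V0 H0 y : EReal) +
      ((∑' m, limInfVal j (V m) (H m) y : ℝ≥0∞) : EReal)) ∧
    c = (V0 : EReal) + ((∑' m, ENNReal.ofReal (V m) : ℝ≥0∞) : EReal) }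

lemma sigmaUpOn_eq_sInf (A : Set Traj) (j : ℕ) (f : Traj → EReal) :
    sigmaUpOn A j f = sInf (CovSet A j f) := rfl

lemma mem_SSet_ne_bot {A : Set Traj} {j : ℕ} {f : Traj → EReal} {c : EReal}
    (hc : c ∈ CovSet A j f) : c ≠ ⊥ := by
  obtain ⟨V0, H0, n0, V, H, _, _, _, _, hcost⟩ := hc
  rw [hcost]
  simp [EReal.add_eq_bot_iff]

lemma elem_mem {A : Set Traj} {j : ℕ} {f : Traj → EReal} {V0 : ℝ} {H0 : ℕ → Traj → ℝ}
    {n0 : ℕ} (hna : NonAnticipOn A H0)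
    (hcov : ∀ y ∈ A, f y ≤ (PiVal j n0 V0 H0 y : EReal)) :
    (V0 : EReal) ∈ CovSet A j f := by
  refine ⟨V0, H0, n0, fun _ => 0, fun _ _ _ => 0, hna, ?_, ?_, ?_, ?_⟩
  · intro m i a _ b _ _; rfl
  · intro m n y _; rw [PiVal_zero]
  · intro y hy
    simpa [limInfVal_zero] using hcov y hy
  · simp

lemma zero_mem (A : Set Traj) (j : ℕ) :
    (0 : EReal) ∈ CovSet A j (fun _ => (0 : EReal)) := by
  have := elem_mem (A := A) (j := j) (f := fun _ => (0:EReal)) (V0 := 0)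
    (H0 := fun _ _ => 0) (n0 := 0) (fun i a _ b _ _ => rfl)
    (fun y _ => by rw [PiVal_zero]; exact le_refl _)
  simpa using this

lemma sigmaUpOn_zero_le (A : Set Traj) (j : ℕ) :
    sigmaUpOn A j (fun _ => (0 : EReal)) ≤ 0 :=
  sInf_le (zero_mem A j)
lemma combine_mem {A : Set Traj} {j : ℕ} {f : Traj → EReal} {c c' : EReal}
    (hc : c ∈ CovSet A j f) (hc' : c' ∈ CovSet A j (fun y => -f y)) :
    c + c' ∈ CovSet A j (fun _ => (0 : EReal)) := by
  obtain ⟨V0, H0, n0, V, H, hna0, hna, hpos, hcov, hcost⟩ := hc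
  obtain ⟨V0', H0', n0', V', H', hna0', hna', hpos', hcov', hcost'⟩ := hc'
  refine ⟨V0 + V0',
    (fun i z => (if i < n0 then H0 i z else 0) + (if i < n0' then H0' i z else 0)),
    max n0 n0',
    (fun m => if Even m then V (m/2) else V' (m/2)),
    (fun m => if Even m then H (m/2) else H' (m/2)),
    ?_, ?_, ?_, ?_, ?_⟩
  · intro i a ha b hb hk
    by_cases h1 : i < n0 <;> by_cases h2 : i < n0' <;>
      simp [h1, h2, hna0 i a ha b hb hk, hna0' i a ha b hb hk]
  · intro m
    by_cases hm : Even m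
    · simpa [hm] using hna (m/2)
    · simpa [hm] using hna' (m/2)
  · intro m n y hy
    by_cases hm : Even m
    · simpa [hm] using hpos (m/2) n y hy
    · simpa [hm] using hpos' (m/2) n y hy
  · intro y hy
    have hts : (∑' m, limInfVal j (if Even m then V (m/2) else V' (m/2))
        (if Even m then H (m/2) else H' (m/2)) y)
        = (∑' m, limInfVal j (V m) (H m) y) + (∑' m, limInfVal j (V' m) (H' m) y) := by
      rw [← tsum_interleave (fun m => limInfVal j (V m) (H m) y)
        (fun m => limInfVal j (V' m) (H' m) y)]
      exact tsum_congr fun m => by by_cases hm : Even m <;> simp [hm]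
    rw [hts, PiVal_combine]
    exact ereal_pair_nonneg (hcov y hy) (hcov' y hy)
  · have hts : (∑' m, ENNReal.ofReal (if Even m then V (m/2) else V' (m/2)))
        = (∑' m, ENNReal.ofReal (V m)) + (∑' m, ENNReal.ofReal (V' m)) := by
      rw [← tsum_interleave (fun m => ENNReal.ofReal (V m))
        (fun m => ENNReal.ofReal (V' m))]
      exact tsum_congr fun m => by by_cases hm : Even m <;> simp [hm]
    rw [hts, hcost, hcost', EReal.coe_add, EReal.coe_ennreal_add]
    abel
lemma down_le_up {A : Set Traj} {j : ℕ}
    (h : sigmaUpOn A j (fun _ => (0 : EReal)) = 0) (f : Traj → EReal) :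
    -sigmaUpOn A j (fun y => -f y) ≤ sigmaUpOn A j f := by
  rw [EReal.neg_le, sigmaUpOn_eq_sInf A j (fun y => -f y)]
  refine le_sInf fun c' hc' => ?_
  rw [EReal.neg_le, sigmaUpOn_eq_sInf A j f]
  refine le_sInf fun c hc => ?_
  refine ereal_neg_le_of_nonneg_add (mem_SSet_ne_bot hc) (mem_SSet_ne_bot hc') ?_
  have := sInf_le (combine_mem hc hc')
  rw [← sigmaUpOn_eq_sInf, h] at this
  exact this

lemma propL_iff (𝒮 : Set Traj) (x : Traj) (j : ℕ) :
    sigmaUpOn (Cond 𝒮 x j) j (fun _ => (0 : EReal)) = 0 ↔ PropL 𝒮 x j := by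
  set A := Cond 𝒮 x j with hA
  constructor
  · intro h V0 H0 n0 V H hna0 hna hpos hcov
    have hm : ((-V0 : ℝ) : EReal) + ((∑' m, ENNReal.ofReal (V m) : ℝ≥0∞) : EReal)
        ∈ CovSet A j (fun _ => (0 : EReal)) := by
      refine ⟨-V0, fun i z => -(H0 i z), n0, V, H, ?_, hna, hpos, ?_, rfl⟩
      · intro i a ha b hb hk
        show -H0 i a = -H0 i b
        rw [hna0 i a ha b hb hk]
      · intro y hy
        rw [PiVal_neg, ereal_nonneg_iff, neg_neg]
        exact hcov y hy
    have h0 : (0 : EReal) ≤ ((-V0 : ℝ) : EReal) +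
        ((∑' m, ENNReal.ofReal (V m) : ℝ≥0∞) : EReal) := by
      have := sInf_le hm
      rw [← sigmaUpOn_eq_sInf, h] at this
      exact this
    have := (ereal_nonneg_iff (-V0) _).mp h0
    rwa [neg_neg] at this
  · intro hL
    refine le_antisymm (sigmaUpOn_zero_le A j) ?_
    rw [sigmaUpOn_eq_sInf]
    refine le_sInf fun c hc => ?_
    obtain ⟨V0, H0, n0, V, H, hna0, hna, hpos, hcov, hcost⟩ := hc
    have key := hL (-V0) (fun i z => -(H0 i z)) n0 V H
      (fun i a ha b hb hk => by show -H0 i a = -H0 i b; rw [hna0 i a ha b hb hk]) hna hpos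
      (fun y hy => by
        rw [PiVal_neg]
        exact (ereal_nonneg_iff _ _).mp (hcov y hy))
    rw [hcost]
    exact (ereal_nonneg_iff V0 _).mpr key
lemma elementary_values {A : Set Traj} {j : ℕ} {V0 : ℝ} {H0 : ℕ → Traj → ℝ} {n0 : ℕ}
    (h : sigmaUpOn A j (fun _ => (0 : EReal)) = 0) (hna0 : NonAnticipOn A H0) :
    -sigmaUpOn A j (fun y => -((PiVal j n0 V0 H0 y : ℝ) : EReal)) = (V0 : EReal) ∧
    sigmaUpOn A j (fun y => ((PiVal j n0 V0 H0 y : ℝ) : EReal)) = (V0 : EReal) := by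
  set g : Traj → EReal := fun y => ((PiVal j n0 V0 H0 y : ℝ) : EReal) with hg
  have hup : sigmaUpOn A j g ≤ (V0 : EReal) := by
    rw [sigmaUpOn_eq_sInf]
    exact sInf_le (elem_mem hna0 fun y hy => le_refl _)
  have hgneg : (fun y => -g y) =
      fun y => ((PiVal j n0 (-V0) (fun i z => -(H0 i z)) y : ℝ) : EReal) :=
    funext fun y => by rw [PiVal_neg, EReal.coe_neg]
  have hup' : sigmaUpOn A j (fun y => -g y) ≤ ((-V0 : ℝ) : EReal) := by
    rw [hgneg, sigmaUpOn_eq_sInf]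
    exact sInf_le (elem_mem
      (fun i a ha b hb hk => by show -H0 i a = -H0 i b; rw [hna0 i a ha b hb hk])
      fun y hy => le_refl _)
  have hdown : (V0 : EReal) ≤ -sigmaUpOn A j (fun y => -g y) := by
    have := EReal.neg_le_neg_iff.mpr hup'
    rwa [EReal.coe_neg, neg_neg] at this
  have hdlu := down_le_up h g
  exact ⟨le_antisymm (hdlu.trans hup) hdown, le_antisymm hup (hdown.trans hdlu)⟩
/-- equivalent characterizations of property `(L_{(S,j)})`. -/
theorem propL_equivalences
    (𝒮 : Set Traj) (x : Traj) (hx : x ∈ 𝒮) (j : ℕ) :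
    ((sigmaUp 𝒮 j (fun _ => (0 : EReal)) x = 0) ↔
      ∀ f : Traj → EReal, sigmaDown 𝒮 j f x ≤ sigmaUp 𝒮 j f x) ∧
    ((sigmaUp 𝒮 j (fun _ => (0 : EReal)) x = 0) ↔ PropL 𝒮 x j) ∧
    ((sigmaUp 𝒮 j (fun _ => (0 : EReal)) x = 0) ↔
      ∀ (V0 : ℝ) (H0 : ℕ → Traj → ℝ) (n0 : ℕ), NonAnticipOn (Cond 𝒮 x j) H0 →
        sigmaDown 𝒮 j (fun y => (PiVal j n0 V0 H0 y : EReal)) x = (V0 : EReal) ∧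
        sigmaUp 𝒮 j (fun y => (PiVal j n0 V0 H0 y : EReal)) x = (V0 : EReal)) := by

  refine ⟨⟨?_, ?_⟩, propL_iff 𝒮 x j, ?_, ?_⟩
  · intro h1 f
    show -sigmaUpOn (Cond 𝒮 x j) j (fun y => -f y) ≤ sigmaUpOn (Cond 𝒮 x j) j f
    exact down_le_up h1 f
  · intro h2
    have hle := sigmaUpOn_zero_le (Cond 𝒮 x j) j
    have h0 : -sigmaUpOn (Cond 𝒮 x j) j (fun _ => (0 : EReal)) ≤
        sigmaUpOn (Cond 𝒮 x j) j (fun _ => (0 : EReal)) := by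
      have := h2 (fun _ => (0 : EReal))
      simpa [sigmaDown, sigmaUp, neg_zero] using this
    refine le_antisymm hle ?_
    calc (0 : EReal) = -0 := neg_zero.symm
      _ ≤ -sigmaUpOn (Cond 𝒮 x j) j (fun _ => (0 : EReal)) := EReal.neg_le_neg_iff.mpr hle
      _ ≤ _ := h0
  · intro h1 V0 H0 n0 hna0
    obtain ⟨hd, hu⟩ := elementary_values (A := Cond 𝒮 x j) (n0 := n0) h1 hna0
    exact ⟨hd, hu⟩
  · intro h4
    have h := (h4 0 (fun _ _ => 0) 0 (fun i a _ b _ _ => rfl)).2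
    have hfun : (fun y => ((PiVal j 0 0 (fun _ _ => 0) y : ℝ) : EReal)) =
        (fun _ => (0 : EReal)) := funext fun y => by rw [PiVal_zero]; rfl
    rw [show sigmaUp 𝒮 j (fun y => ((PiVal j 0 0 (fun _ _ => 0) y : ℝ) : EReal)) x
        = sigmaUp 𝒮 j (fun _ => (0 : EReal)) x from by rw [hfun]] at h
    simpa using h

end
end

section
/- If (S,j) is an arbitrage node of type II, then σ̄_j f(S) = −∞ for every function f : 𝒮 → [-∞,∞]. -/
open Filter Set
open scoped Classical ENNReal

noncomputable section

lemma pisum_aux (s : ℝ) (j n : ℕ) (y : Traj) :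
    PiVal j n 0 (fun i _ => if i = j then s else 0) y =
      if j < n then s * (y (j + 1) - y j) else 0 := by
  unfold PiVal
  simp only [zero_add, ite_mul, zero_mul]
  rw [Finset.sum_ite_eq' (Finset.Ico j n) j (fun i => s * (y (i + 1) - y i))]
  simp [Finset.mem_Ico]

lemma sigmaUpOn_bot_aux (A : Set Traj) (j : ℕ) (s : ℝ)
    (hs : ∀ y ∈ A, 0 < s * (y (j + 1) - y j)) (f : Traj → EReal) :
    sigmaUpOn A j f = ⊥ := by
  have hmem : ∀ r : ℝ, (r : EReal) ∈ { c : EReal | ∃ (V0 : ℝ) (H0 : ℕ → Traj → ℝ) (n0 : ℕ)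
      (V : ℕ → ℝ) (H : ℕ → ℕ → Traj → ℝ),
      NonAnticipOn A H0 ∧ (∀ m, NonAnticipOn A (H m)) ∧
      (∀ m n, ∀ y ∈ A, 0 ≤ PiVal j n (V m) (H m) y) ∧
      (∀ y ∈ A, f y ≤ (PiVal j n0 V0 H0 y : EReal) +
        ((∑' m, limInfVal j (V m) (H m) y : ℝ≥0∞) : EReal)) ∧
      c = (V0 : EReal) + ((∑' m, ENNReal.ofReal (V m) : ℝ≥0∞) : EReal) } := by
    intro r
    refine ⟨r, fun _ _ => 0, j, fun _ => 0, fun _ i _ => if i = j then s else 0,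
      ?_, ?_, ?_, ?_, ?_⟩
    · intro i x hx y hy h; rfl
    · intro m i x hx y hy h; rfl
    · intro m n y hy
      rw [pisum_aux]
      split
      · exact le_of_lt (hs y hy)
      · rfl
    · intro y hy
      have hlim : ∀ m : ℕ, limInfVal j 0 (fun i _ => if i = j then s else 0) y =
          ENNReal.ofReal (s * (y (j + 1) - y j)) := by
        intro m
        unfold limInfVal
        have hev : (fun n => ENNReal.ofReal (PiVal j n 0 (fun i _ => if i = j then s else 0) y))
            =ᶠ[atTop] fun _ => ENNReal.ofReal (s * (y (j + 1) - y j)) := by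
          filter_upwards [eventually_ge_atTop (j + 1)] with n hn
          rw [pisum_aux, if_pos (by omega)]
        rw [liminf_congr hev, liminf_const]
      have htop : (∑' _ : ℕ, limInfVal j 0 (fun i _ => if i = j then s else 0) y) = ⊤ := by
        rw [tsum_congr hlim]
        exact ENNReal.tsum_const_eq_top_of_ne_zero
          (by simp [ENNReal.ofReal_eq_zero, not_le, hs y hy])
      rw [htop]
      simp only [EReal.coe_ennreal_top]
      rw [EReal.add_top_of_ne_bot (by exact EReal.coe_ne_bot _)]
      exact le_top
    · rw [show (∑' _ : ℕ, ENNReal.ofReal (0 : ℝ)) = 0 by simp]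
      simp
  have hle : ∀ r : ℝ, sigmaUpOn A j f ≤ (r : EReal) := fun r => sInf_le (hmem r)
  rw [EReal.eq_bot_iff_forall_lt]
  intro r
  exact lt_of_le_of_lt (hle (r - 1)) (by exact_mod_cast sub_one_lt r)

/-- at a type II arbitrage node, `σ̄_j f(S) = −∞` for every `f`. -/
theorem sigmaUp_bot_of_typeII
    (𝒮 : Set Traj) (x : Traj) (hx : x ∈ 𝒮) (j : ℕ)
    (harb : TypeIINode 𝒮 x j) (f : Traj → EReal) :
    sigmaUp 𝒮 j f x = ⊥ := by
  obtain ⟨⟨hnud, _⟩, hne⟩ := harb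
  have hj : ∀ y ∈ Cond 𝒮 x j, y j = x j := fun y hy => hy.2 j le_rfl
  have hneq : ∀ y ∈ Cond 𝒮 x j, y (j + 1) ≠ x j := by
    intro y hy h
    exact hne ⟨y, hy, h⟩
  rw [UpDownNode, not_and_or] at hnud
  unfold sigmaUp
  rcases hnud with h | h
  · push_neg at h
    refine sigmaUpOn_bot_aux _ j (-1) (fun y hy => ?_) f
    have h1 : y (j + 1) ≤ x j := h y hy
    have h2 : y (j + 1) < x j := lt_of_le_of_ne h1 (hneq y hy)
    rw [hj y hy]
    nlinarith
  · push_neg at h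
    refine sigmaUpOn_bot_aux _ j 1 (fun y hy => ?_) f
    have h1 : x j ≤ y (j + 1) := h y hy
    have h2 : x j < y (j + 1) := lt_of_le_of_ne h1 (fun e => hneq y hy e.symm)
    rw [hj y hy]
    nlinarith

end
end

section
/- For each j ≥ 0, the set N°_j = {S ∈ 𝒮 : (S,j) is an arbitrage node and S_{j+1} ≠ S_j} is a conditionally null set at every node (S,k) with 0 ≤ k ≤ j, i.e., Ī_k(1_{N°_j})(S) = 0. Consequently the countable union N_k = ∪_{j≥k} N°_j is also conditionally null at every (S,k). -/
open Filter Set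
open scoped Classical ENNReal

noncomputable section

/-!
At a node where the price cannot move both ways, betting one unit on the only possible direction
costs nothing and never loses, and it gains strictly whenever the price actually moves there.
Betting so at every such node from time `k` on gives a nonnegative wealth process started at `0`
which is eventually positive on every trajectory of `N_k`; countably many copies of it, at total
cost `0`, superhedge `∞` on `N_k`, hence the indicator of `N_k ⊇ N°_j`.
-/

lemma cond_congr (𝒮 : Set Traj) {x y : Traj} {i : ℕ} (h : ∀ k ≤ i, x k = y k) :
    Cond 𝒮 x i = Cond 𝒮 y i := by
  ext z
  exact and_congr_right fun _ =>
    ⟨fun hz l hl => (hz l hl).trans (h l hl), fun hz l hl => (hz l hl).trans (h l hl).symm⟩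

lemma self_mem_cond {𝒮 : Set Traj} {y : Traj} (hy : y ∈ 𝒮) (i : ℕ) : y ∈ Cond 𝒮 y i :=
  ⟨hy, fun _ _ => rfl⟩

lemma PiVal_zero_s8 (j n : ℕ) (H : ℕ → Traj → ℝ) (y : Traj) :
    PiVal j n 0 H y = ∑ i ∈ Finset.Ico j n, H i y * (y (i + 1) - y i) :=
  zero_add _

lemma PiVal_zero_nonneg {j : ℕ} {H : ℕ → Traj → ℝ} {y : Traj}
    (hH : ∀ i, 0 ≤ H i y * (y (i + 1) - y i)) (n : ℕ) : 0 ≤ PiVal j n 0 H y := by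
  rw [PiVal_zero_s8]
  exact Finset.sum_nonneg fun i _ => hH i

lemma ofReal_gain_le_limInfVal {j i : ℕ} {H : ℕ → Traj → ℝ} {y : Traj}
    (hH : ∀ i, 0 ≤ H i y * (y (i + 1) - y i)) (hji : j ≤ i) :
    ENNReal.ofReal (H i y * (y (i + 1) - y i)) ≤ limInfVal j 0 H y := by
  refine Filter.le_liminf_of_le (by isBoundedDefault) ?_
  filter_upwards [eventually_ge_atTop (i + 1)] with n hn
  rw [PiVal_zero_s8]
  exact ENNReal.ofReal_le_ofReal <| Finset.single_le_sum (fun l _ => hH l)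
    (Finset.mem_Ico.mpr ⟨hji, hn⟩)

lemma IUpOn_eq_zero_of_free_strategy {A : Set Traj} {j : ℕ} {f : Traj → ℝ≥0∞}
    {H : ℕ → Traj → ℝ} (hH : NonAnticipOn A H) (hnonneg : ∀ n, ∀ y ∈ A, 0 ≤ PiVal j n 0 H y)
    (hgain : ∀ y ∈ A, f y ≠ 0 → limInfVal j 0 H y ≠ 0) :
    IUpOn A j f = 0 := by
  refine le_antisymm (sInf_le ⟨fun _ => 0, fun _ => H, fun _ => hH, fun _ => hnonneg,
    fun y hy => ?_, by simp⟩) bot_le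
  by_cases hf : f y = 0
  · simp [hf]
  · simp [ENNReal.tsum_const_eq_top_of_ne_zero (hgain y hy hf)]

def arbitrageStrategy (𝒮 : Set Traj) (i : ℕ) (y : Traj) : ℝ :=
  if ∀ z ∈ Cond 𝒮 y i, y i ≤ z (i + 1) then 1
  else if ∀ z ∈ Cond 𝒮 y i, z (i + 1) ≤ y i then -1 else 0

lemma arbitrageStrategy_nonAnticipOn (𝒮 A : Set Traj) :
    NonAnticipOn A (arbitrageStrategy 𝒮) := by
  intro i x _ y _ hxy
  simp only [arbitrageStrategy, cond_congr 𝒮 hxy, hxy i le_rfl]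

lemma arbitrageStrategy_gain_nonneg {𝒮 : Set Traj} {y : Traj} (hy : y ∈ 𝒮) (i : ℕ) :
    0 ≤ arbitrageStrategy 𝒮 i y * (y (i + 1) - y i) := by
  have hself := self_mem_cond hy i
  unfold arbitrageStrategy
  split_ifs with hup hdown
  · linarith [hup y hself]
  · linarith [hdown y hself]
  · simp

lemma arbitrageStrategy_gain_pos {𝒮 : Set Traj} {y : Traj} {i : ℕ} (hy : y ∈ 𝒮)
    (hnud : ¬ UpDownNode 𝒮 y i) (hmove : y (i + 1) ≠ y i) :
    0 < arbitrageStrategy 𝒮 i y * (y (i + 1) - y i) := by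
  have hself := self_mem_cond hy i
  unfold arbitrageStrategy
  split_ifs with hup hdown
  · linarith [lt_of_le_of_ne (hup y hself) hmove.symm]
  · linarith [lt_of_le_of_ne (hdown y hself) hmove]
  · push Not at hup hdown
    obtain ⟨z, hz, hzdown⟩ := hup
    obtain ⟨w, hw, hwup⟩ := hdown
    exact absurd ⟨⟨w, hw, hwup⟩, ⟨z, hz, hzdown⟩⟩ hnud

lemma IUp_indicator_eq_zero_of_one_sided_moves {𝒮 E : Set Traj} [DecidablePred (· ∈ E)]
    {k : ℕ} (hE : ∀ y ∈ E, ∃ i ≥ k, ¬ UpDownNode 𝒮 y i ∧ y (i + 1) ≠ y i) (x : Traj) :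
    IUp 𝒮 k (fun y => if y ∈ E then 1 else 0) x = 0 := by
  refine IUpOn_eq_zero_of_free_strategy (arbitrageStrategy_nonAnticipOn 𝒮 _)
    (fun n y hy => PiVal_zero_nonneg (arbitrageStrategy_gain_nonneg hy.1) n) fun y hy hyE => ?_
  obtain ⟨i, hki, hnud, hmove⟩ := hE y (not_not.mp fun h => hyE (if_neg h))
  refine ne_of_gt (lt_of_lt_of_le ?_
    (ofReal_gain_le_limInfVal (arbitrageStrategy_gain_nonneg hy.1) hki))
  exact ENNReal.ofReal_pos.mpr (arbitrageStrategy_gain_pos hy.1 hnud hmove)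

/-- the set `N°_j` of trajectories moving at an arbitrage node at time `j`
is conditionally null at every node `(S,k)` with `k ≤ j`, and the union
`N_k = ∪_{j ≥ k} N°_j` is conditionally null at every `(S,k)`. -/
theorem arbitrage_moves_are_null (𝒮 : Set Traj) (j : ℕ) :
    (∀ k ≤ j, ∀ x ∈ 𝒮,
      IUp 𝒮 k
        (fun y => if y ∈ {z ∈ 𝒮 | ArbitrageNode 𝒮 z j ∧ z (j + 1) ≠ z j} then 1 else 0)
        x = 0) ∧
    (∀ k : ℕ, ∀ x ∈ 𝒮,
      IUp 𝒮 k
        (fun y => if y ∈ {z ∈ 𝒮 | ∃ i ≥ k, ArbitrageNode 𝒮 z i ∧ z (i + 1) ≠ z i}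
          then 1 else 0) x = 0) :=
  ⟨fun _ hk x _ => IUp_indicator_eq_zero_of_one_sided_moves
      (fun _ hy => ⟨j, hk, hy.2.1.1, hy.2.2⟩) x,
    fun _ x _ => IUp_indicator_eq_zero_of_one_sided_moves
      (fun _ hy => hy.2.imp fun _ ⟨hki, harb, hmove⟩ => ⟨hki, harb.1, hmove⟩) x⟩

end
end

section
/- The operator Ī (the unconditional null/superhedging operator Ī_0) is isotone (f ≤ g implies Īf ≤ Īg), positively homogeneous (Ī(cf) = c·Īf for c > 0), countably subadditive (Ī(Σ_{n} f_n) ≤ Σ_n Ī f_n for nonnegative f_n), and satisfies Ī(1_𝒮) ≤ 1. -/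
open Filter Set
open scoped Classical ENNReal

noncomputable section

theorem ENNReal.tsum_comp_equiv_prod {α β γ : Type*} (e : γ ≃ α × β) (g : α → β → ℝ≥0∞) :
    ∑' k, g (e k).1 (e k).2 = ∑' a, ∑' b, g a b :=
  (e.tsum_eq fun p => g p.1 p.2).trans ENNReal.tsum_prod

lemma PiVal_const_mul (c : ℝ) (j n : ℕ) (V : ℝ) (H : ℕ → Traj → ℝ) (y : Traj) :
    PiVal j n (c * V) (fun i z => c * H i z) y = c * PiVal j n V H y := by
  simp only [PiVal, mul_add, Finset.mul_sum, mul_assoc]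

lemma limInfVal_const_mul {c : ℝ} (hc : 0 ≤ c) (j : ℕ) (V : ℝ) (H : ℕ → Traj → ℝ) (y : Traj) :
    limInfVal j (c * V) (fun i z => c * H i z) y = ENNReal.ofReal c * limInfVal j V H y := by
  simp only [limInfVal, PiVal_const_mul, ENNReal.ofReal_mul hc,
    ENNReal.liminf_const_mul_of_ne_top ENNReal.ofReal_ne_top]

lemma limInfVal_zero_strategy (j : ℕ) (V : ℝ) (y : Traj) :
    limInfVal j V (fun _ _ => 0) y = ENNReal.ofReal V := by
  simp [limInfVal, PiVal]

/-- The families `(V, H)` over which `IUpOn A j f` takes the infimum of the cost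
`∑' m, ENNReal.ofReal (V m)`. -/
structure IsSuperhedge (A : Set Traj) (j : ℕ) (f : Traj → ℝ≥0∞) (V : ℕ → ℝ)
    (H : ℕ → ℕ → Traj → ℝ) : Prop where
  nonAnticipOn : ∀ m, NonAnticipOn A (H m)
  nonneg : ∀ m n, ∀ y ∈ A, 0 ≤ PiVal j n (V m) (H m) y
  le_tsum : ∀ y ∈ A, f y ≤ ∑' m, limInfVal j (V m) (H m) y

section Superhedge

variable {A : Set Traj} {j : ℕ} {f g : Traj → ℝ≥0∞} {V : ℕ → ℝ} {H : ℕ → ℕ → Traj → ℝ}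

lemma IUpOn_le_of_isSuperhedge (h : IsSuperhedge A j f V H) :
    IUpOn A j f ≤ ∑' m, ENNReal.ofReal (V m) :=
  sInf_le ⟨V, H, h.nonAnticipOn, h.nonneg, h.le_tsum, rfl⟩

lemma le_IUpOn_of_forall_isSuperhedge {c : ℝ≥0∞}
    (h : ∀ V H, IsSuperhedge A j f V H → c ≤ ∑' m, ENNReal.ofReal (V m)) : c ≤ IUpOn A j f :=
  le_sInf <| by
    rintro _ ⟨V, H, hNA, hnonneg, hle, rfl⟩
    exact h V H ⟨hNA, hnonneg, hle⟩

lemma exists_isSuperhedge_lt {c : ℝ≥0∞} (h : IUpOn A j f < c) :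
    ∃ V H, IsSuperhedge A j f V H ∧ ∑' m, ENNReal.ofReal (V m) < c := by
  obtain ⟨_, ⟨V, H, hNA, hnonneg, hle, rfl⟩, hlt⟩ := sInf_lt_iff.1 h
  exact ⟨V, H, ⟨hNA, hnonneg, hle⟩, hlt⟩

lemma IsSuperhedge.mono (h : IsSuperhedge A j g V H) (hfg : ∀ y ∈ A, f y ≤ g y) :
    IsSuperhedge A j f V H :=
  ⟨h.nonAnticipOn, h.nonneg, fun y hy => (hfg y hy).trans (h.le_tsum y hy)⟩

lemma IsSuperhedge.const_mul {c : ℝ} (hc : 0 ≤ c) (h : IsSuperhedge A j f V H) :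
    IsSuperhedge A j (fun y => ENNReal.ofReal c * f y) (fun m => c * V m)
      (fun m i y => c * H m i y) where
  nonAnticipOn m i x hx y hy hxy := congrArg (c * ·) (h.nonAnticipOn m i x hx y hy hxy)
  nonneg m n y hy := by
    rw [PiVal_const_mul]
    exact mul_nonneg hc (h.nonneg m n y hy)
  le_tsum y hy := by
    simp only [limInfVal_const_mul hc, ENNReal.tsum_mul_left]
    gcongr
    exact h.le_tsum y hy

lemma IsSuperhedge.tsum {F : ℕ → Traj → ℝ≥0∞} {V : ℕ → ℕ → ℝ} {H : ℕ → ℕ → ℕ → Traj → ℝ}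
    (h : ∀ n, IsSuperhedge A j (F n) (V n) (H n)) (e : ℕ ≃ ℕ × ℕ) :
    IsSuperhedge A j (fun y => ∑' n, F n y) (fun k => V (e k).1 (e k).2)
      (fun k => H (e k).1 (e k).2) where
  nonAnticipOn k := (h (e k).1).nonAnticipOn (e k).2
  nonneg k := (h (e k).1).nonneg (e k).2
  le_tsum y hy := by
    rw [ENNReal.tsum_comp_equiv_prod e fun n m => limInfVal j (V n m) (H n m) y]
    exact ENNReal.tsum_le_tsum fun n => (h n).le_tsum y hy

lemma IUpOn_mono (hfg : ∀ y ∈ A, f y ≤ g y) : IUpOn A j f ≤ IUpOn A j g :=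
  le_IUpOn_of_forall_isSuperhedge fun _ _ h => IUpOn_le_of_isSuperhedge (h.mono hfg)

lemma IUpOn_const_mul_le {c : ℝ} (hc : 0 < c) (f : Traj → ℝ≥0∞) :
    IUpOn A j (fun y => ENNReal.ofReal c * f y) ≤ ENNReal.ofReal c * IUpOn A j f := by
  rw [mul_comm, ← ENNReal.div_le_iff_le_mul (Or.inl (ENNReal.ofReal_pos.2 hc).ne')
    (Or.inl ENNReal.ofReal_ne_top)]
  refine le_IUpOn_of_forall_isSuperhedge fun V H h => ENNReal.div_le_of_le_mul ?_
  calc _ ≤ ∑' m, ENNReal.ofReal (c * V m) := IUpOn_le_of_isSuperhedge (h.const_mul hc.le)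
    _ = _ := by simp only [ENNReal.ofReal_mul hc.le, ENNReal.tsum_mul_left, mul_comm]

lemma IUpOn_const_mul {c : ℝ} (hc : 0 < c) (f : Traj → ℝ≥0∞) :
    IUpOn A j (fun y => ENNReal.ofReal c * f y) = ENNReal.ofReal c * IUpOn A j f := by
  refine le_antisymm (IUpOn_const_mul_le hc f) ?_
  have hinv : ENNReal.ofReal c⁻¹ * ENNReal.ofReal c = 1 := by
    rw [← ENNReal.ofReal_mul (inv_nonneg.2 hc.le), inv_mul_cancel₀ hc.ne', ENNReal.ofReal_one]
  calc ENNReal.ofReal c * IUpOn A j f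
      = ENNReal.ofReal c *
          IUpOn A j (fun y => ENNReal.ofReal c⁻¹ * (ENNReal.ofReal c * f y)) := by
        simp only [← mul_assoc, hinv, one_mul]
    _ ≤ ENNReal.ofReal c * (ENNReal.ofReal c⁻¹ * IUpOn A j (fun y => ENNReal.ofReal c * f y)) := by
        gcongr
        exact IUpOn_const_mul_le (inv_pos.2 hc) _
    _ = IUpOn A j (fun y => ENNReal.ofReal c * f y) := by
        rw [← mul_assoc, mul_comm (ENNReal.ofReal c), hinv, one_mul]

/-- Spending an extra `δ n` on the `n`-th summand, with `∑ δ n ≤ ε`, and interleaving the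
countably many resulting families into one via `ℕ ≃ ℕ × ℕ`. -/
lemma IUpOn_tsum_le (F : ℕ → Traj → ℝ≥0∞) :
    IUpOn A j (fun y => ∑' n, F n y) ≤ ∑' n, IUpOn A j (F n) := by
  refine ENNReal.le_of_forall_pos_le_add fun ε hε hfin => ?_
  obtain ⟨δ, hδ, hδε⟩ := ENNReal.exists_pos_sum_of_countable (ENNReal.coe_ne_zero.2 hε.ne') ℕ
  have hnear (n : ℕ) : ∃ V H, IsSuperhedge A j (F n) V H ∧
      ∑' m, ENNReal.ofReal (V m) < IUpOn A j (F n) + δ n :=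
    exists_isSuperhedge_lt <| ENNReal.lt_add_right (ENNReal.ne_top_of_tsum_ne_top hfin.ne n)
      (ENNReal.coe_ne_zero.2 (hδ n).ne')
  choose V H hV hcost using hnear
  calc _ ≤ ∑' k, ENNReal.ofReal (V (Nat.pairEquiv.symm k).1 (Nat.pairEquiv.symm k).2) :=
        IUpOn_le_of_isSuperhedge (IsSuperhedge.tsum hV Nat.pairEquiv.symm)
    _ = ∑' n, ∑' m, ENNReal.ofReal (V n m) :=
        ENNReal.tsum_comp_equiv_prod _ fun n m => ENNReal.ofReal (V n m)
    _ ≤ ∑' n, (IUpOn A j (F n) + δ n) := ENNReal.tsum_le_tsum fun n => (hcost n).le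
    _ = ∑' n, IUpOn A j (F n) + ∑' n, (δ n : ℝ≥0∞) := ENNReal.tsum_add
    _ ≤ ∑' n, IUpOn A j (F n) + ε := by gcongr

/-- Holding one unit of cash and never trading. -/
lemma IUpOn_one_le : IUpOn A j (fun _ => 1) ≤ 1 := by
  have hcost : ∑' m : ℕ, ENNReal.ofReal (if m = 0 then 1 else 0) = 1 := by
    simp [apply_ite ENNReal.ofReal]
  have hcash : IsSuperhedge A j (fun _ => 1) (fun m => if m = 0 then 1 else 0) fun _ _ _ => 0 :=
    { nonAnticipOn := fun _ _ _ _ _ _ _ => rfl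
      nonneg := fun m n y _ => by simp only [PiVal]; split_ifs <;> simp
      le_tsum := fun y _ => by simp only [limInfVal_zero_strategy, hcost, le_refl] }
  exact (IUpOn_le_of_isSuperhedge hcash).trans_eq hcost

end Superhedge

/-- `Ī` is isotone, positively homogeneous, countably subadditive,
and `Ī(1_𝒮) ≤ 1`. -/
theorem IUp_basic_properties (𝒮 : Set Traj) :
    (∀ f g : Traj → ℝ≥0∞, (∀ y ∈ 𝒮, f y ≤ g y) → IUpOn 𝒮 0 f ≤ IUpOn 𝒮 0 g) ∧
    (∀ c : ℝ, 0 < c → ∀ f : Traj → ℝ≥0∞,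
      IUpOn 𝒮 0 (fun y => ENNReal.ofReal c * f y) = ENNReal.ofReal c * IUpOn 𝒮 0 f) ∧
    (∀ F : ℕ → Traj → ℝ≥0∞,
      IUpOn 𝒮 0 (fun y => ∑' n, F n y) ≤ ∑' n, IUpOn 𝒮 0 (F n)) ∧
    IUpOn 𝒮 0 (fun _ => 1) ≤ 1 :=
  ⟨fun _ _ => IUpOn_mono, fun _ hc => IUpOn_const_mul hc, IUpOn_tsum_le, IUpOn_one_le⟩

end
end

section
/- Aggregation Lemma: Fix j ≥ 0, sequences of non-anticipative functions H^m = (H^m_i)_{i≥j} and capitals V^m(S) depending only on S_0,…,S_j, for m ≥ 1. Fix a node (S,j) and assume for all m ≥ 1, n ≥ j, and S' ∈ 𝒮_{(S,j)} that Π^{V^m,H^m}_{j,n}(S') = V^m(S) + Σ_{i=j}^{n−1} H^m_i(S')(S'_{i+1} − S'_i) ≥ 0 and Σ_{m≥1} V^m(S) < ∞. Then for every Ŝ ∈ 𝒮_{(S,j)} and k ≥ j: if (Ŝ,k) is an up-down node and, for every j ≤ p < k, (Ŝ,p) is an up-down node or Ŝ_{p+1} = Ŝ_p, then the series Σ_{m≥1}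 H^m_k(Ŝ) converges in ℝ. -/
open Filter Set
open scoped Classical ENNReal

noncomputable section

/-- Aggregation Lemma. -/
theorem aggregation_lemma
    (𝒮 : Set Traj) (x : Traj) (hx : x ∈ 𝒮) (j : ℕ)
    (V : ℕ → ℝ) (H : ℕ → ℕ → Traj → ℝ)
    (hna : ∀ m, NonAnticipOn (Cond 𝒮 x j) (H m))
    (hpos : ∀ m n, ∀ y ∈ Cond 𝒮 x j, 0 ≤ PiVal j n (V m) (H m) y)
    (hsum : Summable V)
    (z : Traj) (hz : z ∈ Cond 𝒮 x j) (k : ℕ) (hk : j ≤ k)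
    (hud : UpDownNode 𝒮 z k)
    (hprev : ∀ p, j ≤ p → p < k → UpDownNode 𝒮 z p ∨ z (p + 1) = z p) :
    Summable (fun m => H m k z) := by
  have hzx : z ∈ Cond 𝒮 x j := hz
  have hsub : ∀ p, j ≤ p → Cond 𝒮 z p ⊆ Cond 𝒮 x j := by
    intro p hp y hy
    exact ⟨hy.1, fun i hi => (hy.2 i (le_trans hi hp)).trans (hz.2 i hi)⟩
  have hzz : ∀ p, z ∈ Cond 𝒮 z p := fun p => ⟨hz.1, fun i _ => rfl⟩
  -- key identity
  have key : ∀ p, j ≤ p → ∀ m, ∀ y ∈ Cond 𝒮 z p,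
      PiVal j (p+1) (V m) (H m) y
        = PiVal j p (V m) (H m) z + H m p z * (y (p+1) - z p) := by
    intro p hp m y hy
    have hyx : y ∈ Cond 𝒮 x j := hsub p hp hy
    unfold PiVal
    rw [Finset.sum_Ico_succ_top hp]
    have hterm : ∀ i ∈ Finset.Ico j p,
        H m i y * (y (i+1) - y i) = H m i z * (z (i+1) - z i) := by
      intro i hi
      obtain ⟨_, hip⟩ := Finset.mem_Ico.mp hi
      have h1 : H m i y = H m i z :=
        hna m i y hyx z hzx (fun l hl => hy.2 l (hl.trans hip.le))
      have h2 : y (i+1) = z (i+1) := hy.2 _ hip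
      have h3 : y i = z i := hy.2 i hip.le
      rw [h1, h2, h3]
    rw [Finset.sum_congr rfl hterm]
    have h4 : H m p y = H m p z := hna m p y hyx z hzx (fun l hl => hy.2 l hl)
    have h5 : y p = z p := hy.2 p le_rfl
    rw [h4, h5]; ring
  -- bound at up-down nodes
  have bound : ∀ p, j ≤ p → UpDownNode 𝒮 z p → ∃ C : ℝ, 0 ≤ C ∧ ∀ m,
      |H m p z| ≤ C * PiVal j p (V m) (H m) z := by
    intro p hp hudp
    obtain ⟨⟨yu, hyu, hyu'⟩, ⟨yd, hyd, hyd'⟩⟩ := hudp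
    have hapos : (0:ℝ) < yu (p+1) - z p := sub_pos.mpr hyu'
    have hbpos : (0:ℝ) < z p - yd (p+1) := sub_pos.mpr hyd'
    set a := yu (p+1) - z p with ha
    set b := z p - yd (p+1) with hb
    refine ⟨max (1/a) (1/b), le_trans (by positivity) (le_max_left _ _), fun m => ?_⟩
    have hu := hpos m (p+1) yu (hsub p hp hyu)
    have hd := hpos m (p+1) yd (hsub p hp hyd)
    rw [key p hp m yu hyu] at hu
    rw [key p hp m yd hyd] at hd
    have hB : 0 ≤ PiVal j p (V m) (H m) z := hpos m p z hzx
    set B := PiVal j p (V m) (H m) z with hBdef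
    have hdb : yd (p+1) - z p = -b := by rw [hb]; ring
    rw [hdb] at hd
    rcases le_or_gt 0 (H m p z) with h | h
    · rw [abs_of_nonneg h]
      have h1 : H m p z * b ≤ B := by nlinarith
      have h2 : H m p z ≤ B * (1/b) := by
        rw [mul_one_div, le_div_iff₀ hbpos]; exact h1
      calc H m p z ≤ B * (1/b) := h2
        _ = (1/b) * B := mul_comm _ _
        _ ≤ max (1/a) (1/b) * B :=
            mul_le_mul_of_nonneg_right (le_max_right _ _) hB
    · rw [abs_of_neg h]
      have h1 : (-H m p z) * a ≤ B := by nlinarith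
      have h2 : -H m p z ≤ B * (1/a) := by
        rw [mul_one_div, le_div_iff₀ hapos]; exact h1
      calc -H m p z ≤ B * (1/a) := h2
        _ = (1/a) * B := mul_comm _ _
        _ ≤ max (1/a) (1/b) * B :=
            mul_le_mul_of_nonneg_right (le_max_left _ _) hB
  -- summability of PiVal along z, by induction
  have sumP : ∀ p, j ≤ p → p ≤ k → Summable (fun m => PiVal j p (V m) (H m) z) := by
    intro p hp
    induction p, hp using Nat.le_induction with
    | base => intro _; simpa [PiVal] using hsum
    | succ p hp ih =>
      intro hpk
      have hpk' : p < k := hpk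
      have ihp := ih (le_of_lt hpk')
      have hkey : ∀ m, PiVal j (p+1) (V m) (H m) z
          = PiVal j p (V m) (H m) z + H m p z * (z (p+1) - z p) :=
        fun m => key p hp m z (hzz p)
      rcases hprev p hp hpk' with hudp | hflat
      · obtain ⟨C, hC, hCb⟩ := bound p hp hudp
        refine Summable.of_nonneg_of_le
          (fun m => hpos m (p+1) z hzx)
          (fun m => ?_)
          (ihp.mul_left (1 + C * |z (p+1) - z p|))
        rw [hkey m]
        have h1 : H m p z * (z (p+1) - z p) ≤ |H m p z| * |z (p+1) - z p| := by
          calc H m p z * (z (p+1) - z p) ≤ |H m p z * (z (p+1) - z p)| := le_abs_self _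
            _ = |H m p z| * |z (p+1) - z p| := abs_mul _ _
        have h2 : |H m p z| * |z (p+1) - z p|
            ≤ C * PiVal j p (V m) (H m) z * |z (p+1) - z p| :=
          mul_le_mul_of_nonneg_right (hCb m) (abs_nonneg _)
        have hB : 0 ≤ PiVal j p (V m) (H m) z := hpos m p z hzx
        nlinarith [h1, h2, hB]
      · have heq : (fun m => PiVal j (p+1) (V m) (H m) z)
            = fun m => PiVal j p (V m) (H m) z := by
          funext m; rw [hkey m, hflat]; ring
        rw [heq]; exact ihp
  -- conclude
  obtain ⟨C, hC, hCb⟩ := bound k hk hud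
  have hPk := sumP k hk le_rfl
  have habs : Summable (fun m => |H m k z|) :=
    Summable.of_nonneg_of_le (fun m => abs_nonneg _) hCb (hPk.mul_left C)
  exact habs.of_abs


end
end
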